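/- arXiv:1411.4762 — 7 statements merged into one kernel-verified Lean document; each statement's English description precedes it below -/
import Mathlib

section
/- Let F_q be a finite field and let G be an n × k Cauchy matrix over F_q. Let γ ≥ 1 be an integer with 2γ ≤ n and 2γ < k. Then any γ-sparse vector z ∈ F_q^k is uniquely determined by any 2γ coordinates of Gz: if z, z' ∈ F_q^k are both γ-sparse, R is a set of 2γ row indices, and (Gz)_i = (Gz')_i for all i ∈ R, then z = z'. -/
/-!
If `Gz` and `Gz'` agree on `R`, then `w = z - z'` is `2γ`-sparse and `∑ⱼ wⱼ / (x - f j) = 0`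
at the `2γ` distinct points `x = h i`, `i ∈ R`. By the barycentric formula, with `s` the support
of `w`, this sum is the value at `x` of the Lagrange interpolant on the nodes `f j`, `j ∈ s`, with
values `wⱼ / nodalWeight s f j`, divided by the value at `x` of the nodal polynomial of `s`. That
interpolant has degree `< #s ≤ 2γ` and `2γ` roots, so it vanishes, and so does `w`.
-/

open Finset Polynomial

theorem hammingNorm_sub_le {ι β : Type*} [Fintype ι] [AddGroup β] [DecidableEq β]
    (x y : ι → β) : hammingNorm (x - y) ≤ hammingNorm x + hammingNorm y := by
  calc hammingNorm (x - y)
      = hammingDist x y := by simp [hammingNorm, hammingDist, sub_eq_zero]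
    _ ≤ hammingDist x 0 + hammingDist 0 y := hammingDist_triangle x 0 y
    _ = hammingNorm x + hammingNorm y := by
      rw [hammingDist_comm 0 y, hammingDist_zero_right, hammingDist_zero_right]

namespace Lagrange

variable {F ι : Type*} [Field F]

theorem eq_zero_of_sum_inv_sub_mul_eq_zero [DecidableEq ι] {s : Finset ι} {v : ι → F}
    (hvs : Set.InjOn v s) {T : Finset F} (hsT : #s ≤ #T) (hTv : ∀ x ∈ T, ∀ i ∈ s, x ≠ v i)
    {w : ι → F} (hw : ∀ x ∈ T, ∑ i ∈ s, (x - v i)⁻¹ * w i = 0) : ∀ i ∈ s, w i = 0 := by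
  set r : ι → F := fun i => (nodalWeight s v i)⁻¹ * w i
  have hvanish : ∀ x ∈ T, (interpolate s v r).eval x = 0 := fun x hx => by
    rw [eval_interpolate_not_at_node r (hTv x hx), ← mul_zero (eval x (nodal s v)), ← hw x hx]
    congr 1
    refine sum_congr rfl fun i hi => ?_
    have := nodalWeight_ne_zero hvs hi
    simp only [r]
    field_simp
  have hzero : interpolate s v r = 0 :=
    eq_zero_of_degree_lt_of_eval_finset_eq_zero T
      ((degree_interpolate_lt r hvs).trans_le (by exact_mod_cast hsT)) hvanish
  intro i hi
  have := eval_interpolate_at_node r hvs hi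
  rw [hzero, eval_zero] at this
  simpa [r, nodalWeight_ne_zero hvs hi] using this.symm

theorem eq_zero_of_hammingNorm_le [Fintype ι] [DecidableEq F] {v : ι → F}
    (hv : Function.Injective v) {T : Finset F} {w : ι → F} (hwT : hammingNorm w ≤ #T)
    (hTv : ∀ x ∈ T, ∀ i, x ≠ v i) (hw : ∀ x ∈ T, ∑ i, (x - v i)⁻¹ * w i = 0) : w = 0 := by
  classical
  have hsupp : ∀ x ∈ T, ∑ i with w i ≠ 0, (x - v i)⁻¹ * w i = 0 := fun x hx => by
    rw [sum_filter_of_ne fun i _ hne => right_ne_zero_of_mul hne]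
    exact hw x hx
  have hzero :=
    eq_zero_of_sum_inv_sub_mul_eq_zero hv.injOn hwT (fun x hx i _ => hTv x hx i) hsupp
  ext i
  by_contra hi
  exact hi (hzero i (by simpa using hi))

end Lagrange

theorem stmt_6_general {F : Type*} [Field F] [DecidableEq F]
    {n k γ : ℕ}
    (h : Fin n → F) (f : Fin k → F)
    (hh : Function.Injective h) (hf : Function.Injective f)
    (hhf : ∀ i j, h i ≠ f j)
    (G : Matrix (Fin n) (Fin k) F) (hG : ∀ i j, G i j = (h i - f j)⁻¹)
    (z z' : Fin k → F) (hz : hammingNorm z ≤ γ) (hz' : hammingNorm z' ≤ γ)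
    (R : Finset (Fin n)) (hR : R.card = 2 * γ)
    (hagree : ∀ i ∈ R, G.mulVec z i = G.mulVec z' i) : z = z' := by
  have hsparse : hammingNorm (z - z') ≤ #(R.image h) := by
    rw [card_image_of_injective _ hh, hR]
    linarith [hammingNorm_sub_le z z']
  have hnodes : ∀ x ∈ R.image h, ∀ j, x ≠ f j := by
    simp only [mem_image, forall_exists_index, and_imp]
    rintro _ i - rfl
    exact hhf i
  have hkernel : ∀ x ∈ R.image h, ∑ j, (x - f j)⁻¹ * (z - z') j = 0 := by
    simp only [mem_image, forall_exists_index, and_imp]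
    rintro _ i hi rfl
    simpa [Matrix.mulVec, dotProduct, hG, mul_sub, sum_sub_distrib, sub_eq_zero] using hagree i hi
  exact sub_eq_zero.1 (Lagrange.eq_zero_of_hammingNorm_le hf hsparse hnodes hkernel)

/-- For a Cauchy matrix `G` over a finite field with `2γ ≤ n` and `2γ < k`, any `γ`-sparse
vector `z` is uniquely determined by any `2γ` coordinates of `Gz`. -/
theorem stmt_6 {F : Type*} [Field F] [Fintype F] [DecidableEq F]
    {n k γ : ℕ} (hγ : 1 ≤ γ) (hn : 2 * γ ≤ n) (hk : 2 * γ < k)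
    (h : Fin n → F) (f : Fin k → F)
    (hh : Function.Injective h) (hf : Function.Injective f)
    (hhf : ∀ i j, h i ≠ f j)
    (G : Matrix (Fin n) (Fin k) F) (hG : ∀ i j, G i j = (h i - f j)⁻¹)
    (z z' : Fin k → F) (hz : hammingNorm z ≤ γ) (hz' : hammingNorm z' ≤ γ)
    (R : Finset (Fin n)) (hR : R.card = 2 * γ)
    (hagree : ∀ i ∈ R, G.mulVec z i = G.mulVec z' i) : z = z' :=
  stmt_6_general h f hh hf hhf G hG z z' hz hz' R hR hagree
end

section
/- Let F_q be a finite field and let G be an n × k Cauchy matrix over F_q with n ≥ k. Then the (n,k) linear code with generator matrix G is maximum distance separable in the sense that any original vector can be recovered from any k coded symbols: for every subset R of row indices with |R| = k and all x, x' ∈ F_q^k, if (Gx)_i = (Gx')_i for all i ∈ R, then x = x'. -/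
open Polynomial Finset

/-- The `(n,k)` code generated by an `n × k` Cauchy matrix `G` (with `n ≥ k`) over a finite
field is MDS: the original vector is recoverable from any `k` coded symbols. -/
theorem stmt_7 {F : Type*} [Field F] [Fintype F] [DecidableEq F]
    {n k : ℕ} (hkn : k ≤ n)
    (h : Fin n → F) (f : Fin k → F)
    (hh : Function.Injective h) (hf : Function.Injective f)
    (hhf : ∀ i j, h i ≠ f j)
    (G : Matrix (Fin n) (Fin k) F) (hG : ∀ i j, G i j = (h i - f j)⁻¹)
    (R : Finset (Fin n)) (hR : R.card = k)
    (x x' : Fin k → F) (hagree : ∀ i ∈ R, G.mulVec x i = G.mulVec x' i) : x = x' := by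
  rcases Nat.eq_zero_or_pos k with hk0 | hkpos
  · funext j; exact absurd j.2 (by omega)
  set y : Fin k → F := fun j => x j - x' j with hy
  suffices hy0 : ∀ j, y j = 0 by
    funext j; have := hy0 j; simpa [hy, sub_eq_zero] using this
  -- key: for i ∈ R, ∑ j, y j * (h i - f j)⁻¹ = 0
  have hsum : ∀ i ∈ R, ∑ j, y j * (h i - f j)⁻¹ = 0 := by
    intro i hi
    have := hagree i hi
    simp only [Matrix.mulVec, dotProduct, hG] at this
    have : ∑ j, (h i - f j)⁻¹ * x j - ∑ j, (h i - f j)⁻¹ * x' j = 0 := by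
      rw [this]; ring
    rw [← Finset.sum_sub_distrib] at this
    rw [← this]
    apply Finset.sum_congr rfl
    intro j _
    simp [hy]; ring
  -- define the polynomial
  set P : F[X] := ∑ j, C (y j) * ∏ m ∈ univ.erase j, (X - C (f m)) with hP
  have hdiff : ∀ i j, h i - f j ≠ 0 := fun i j => sub_ne_zero.mpr (hhf i j)
  have hevalR : ∀ i ∈ R, P.eval (h i) = 0 := by
    intro i hi
    have key := hsum i hi
    have : P.eval (h i) = (∑ j, y j * (h i - f j)⁻¹) * ∏ m, (h i - f m) := by
      rw [Finset.sum_mul]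
      simp only [hP, eval_finset_sum, eval_mul, eval_C, eval_prod, eval_sub, eval_X]
      apply Finset.sum_congr rfl
      intro j _
      rw [mul_assoc]
      congr 1
      rw [← Finset.mul_prod_erase _ _ (Finset.mem_univ j), ← mul_assoc,
        inv_mul_cancel₀ (hdiff i j), one_mul]
    rw [this, key, zero_mul]
  have hdeg : P.natDegree < k := by
    apply lt_of_le_of_lt (Polynomial.natDegree_sum_le _ _)
    rw [Finset.fold_max_lt]
    refine ⟨hkpos, fun j _ => ?_⟩
    apply lt_of_le_of_lt (natDegree_mul_le)
    have h1 : (C (y j)).natDegree = 0 := natDegree_C _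
    have h2 : (∏ m ∈ univ.erase j, (X - C (f m))).natDegree ≤ (univ.erase j).card := by
      apply le_trans (natDegree_prod_le _ _)
      apply le_trans (Finset.sum_le_card_nsmul _ _ 1 _)
      · simp
      · intro m _; exact natDegree_X_sub_C_le _
    rw [h1, zero_add]
    calc (∏ m ∈ univ.erase j, (X - C (f m))).natDegree ≤ (univ.erase j).card := h2
      _ = k - 1 := by simp
      _ < k := Nat.sub_lt hkpos one_pos
  have hPzero : P = 0 := by
    apply Polynomial.eq_zero_of_natDegree_lt_card_of_eval_eq_zero' P (R.image h)
    · intro a ha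
      obtain ⟨i, hi, rfl⟩ := Finset.mem_image.mp ha
      exact hevalR i hi
    · rwa [Finset.card_image_of_injective _ hh, hR]
  intro j
  have := congrArg (Polynomial.eval (f j)) hPzero
  simp only [hP, eval_finset_sum, eval_mul, eval_C, eval_prod, eval_sub, eval_X,
    eval_zero] at this
  rw [Finset.sum_eq_single j] at this
  · rcases mul_eq_zero.mp this with h0 | h0
    · exact h0
    · exfalso
      exact (Finset.prod_ne_zero_iff.mpr
        (fun m hm => sub_ne_zero.mpr fun e => (Finset.mem_erase.mp hm).1 (hf e.symm))) h0
  · intro b _ hbj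
    have : ∏ m ∈ univ.erase b, (f j - f m) = 0 :=
      Finset.prod_eq_zero (Finset.mem_erase.mpr ⟨hbj.symm, Finset.mem_univ j⟩) (sub_self _)
    rw [this, mul_zero]
  · intro hj; exact absurd (Finset.mem_univ j) hj
end

section
/- Let F_q be a finite field, let k < n, and let B be an (n−k) × k Cauchy matrix over F_q. Form the n × k systematic generator matrix G_S obtained by stacking the k × k identity matrix I_k on top of B. Then for every subset R of row indices of G_S with |R| = k, the k × k submatrix of G_S formed by the rows in R is invertible; in particular the systematic code generated by G_S is MDS. -/
/-!
A vector `v` in the kernel of `[I; C]`, with `C` the Cauchy matrix `(h i - f j)⁻¹`, is turned into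
the polynomial `P = ∑ⱼ v j ∏_{i ≠ j} (X - f i)` of degree `< k`, i.e. `∑ⱼ v j / (X - f j)` with the
denominators cleared. An identity row `a` says `v a = 0`, which is `P (f a) = 0`; a Cauchy row `b`
says `∑ⱼ v j / (h b - f j) = 0`, which is `P (h b) = 0`. Any `k` rows therefore give `k` distinct
roots of `P`, so `P = 0` and hence `v = 0`.
-/

open Polynomial Lagrange Finset Matrix

section

variable {F ι κ : Type*} [Field F]

def cauchyMatrix (h : κ → F) (f : ι → F) : Matrix κ ι F :=
  Matrix.of fun i j => (h i - f j)⁻¹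

section CauchyPoly

variable [Fintype ι] [DecidableEq ι] {f : ι → F}

/-- `∑ⱼ v j ∏_{i ≠ j} (X - f i)`, written as a Lagrange interpolant in barycentric weights. -/
noncomputable def cauchyPoly (f v : ι → F) : F[X] :=
  interpolate univ f fun j => (nodalWeight univ f j)⁻¹ * v j

theorem degree_cauchyPoly_lt (hf : Function.Injective f) (v : ι → F) :
    (cauchyPoly f v).degree < Fintype.card ι :=
  card_univ (α := ι) ▸ degree_interpolate_lt _ hf.injOn

theorem eval_cauchyPoly_node (hf : Function.Injective f) (v : ι → F) (a : ι) :
    (cauchyPoly f v).eval (f a) = (nodalWeight univ f a)⁻¹ * v a :=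
  eval_interpolate_at_node _ hf.injOn (mem_univ a)

theorem eval_cauchyPoly_of_forall_ne (hf : Function.Injective f) (v : ι → F) {x : F}
    (hx : ∀ j, x ≠ f j) :
    (cauchyPoly f v).eval x = (nodal univ f).eval x * ∑ j, (x - f j)⁻¹ * v j := by
  rw [cauchyPoly, eval_interpolate_not_at_node _ fun j _ => hx j]
  congr 1
  refine sum_congr rfl fun j _ => ?_
  have := nodalWeight_ne_zero hf.injOn (mem_univ j)
  field_simp

theorem cauchyPoly_eq_zero_iff (hf : Function.Injective f) {v : ι → F} :
    cauchyPoly f v = 0 ↔ v = 0 := by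
  refine ⟨fun hP => funext fun a => ?_, fun hv => by simp [cauchyPoly, hv]⟩
  have := eval_cauchyPoly_node hf v a
  rw [hP, eval_zero, eq_comm, mul_eq_zero] at this
  exact this.resolve_left (inv_ne_zero (nodalWeight_ne_zero hf.injOn (mem_univ a)))

end CauchyPoly

variable [Fintype ι] [DecidableEq ι] {h : κ → F} {f : ι → F}

theorem eval_cauchyPoly_eq_zero_of_mulVec_apply_eq_zero (hf : Function.Injective f)
    (hhf : ∀ i j, h i ≠ f j) {v : ι → F} {x : ι ⊕ κ}
    (hv : (fromRows 1 (cauchyMatrix h f) *ᵥ v) x = 0) :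
    (cauchyPoly f v).eval (Sum.elim f h x) = 0 := by
  rcases x with a | b
  · simp only [fromRows_mulVec, Sum.elim_inl, one_mulVec] at hv
    simp [eval_cauchyPoly_node hf, hv]
  · rw [fromRows_mulVec, Sum.elim_inr] at hv
    simp only [mulVec, dotProduct, cauchyMatrix, of_apply] at hv
    rw [Sum.elim_inr, eval_cauchyPoly_of_forall_ne hf v (hhf b), hv, mul_zero]

theorem isUnit_submatrix_fromRows_one_cauchyMatrix (hh : Function.Injective h)
    (hf : Function.Injective f) (hhf : ∀ i j, h i ≠ f j) {r : ι → ι ⊕ κ}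
    (hr : Function.Injective r) :
    IsUnit ((fromRows 1 (cauchyMatrix h f)).submatrix r id) := by
  rw [isUnit_iff_isUnit_det, isUnit_iff_ne_zero, Ne, ← exists_mulVec_eq_zero_iff]
  rintro ⟨v, hv, hMv⟩
  have hnodes : Function.Injective (Sum.elim f h ∘ r) :=
    (hf.sumElim hh fun a b => (hhf b a).symm).comp hr
  refine hv ((cauchyPoly_eq_zero_iff hf).mp ?_)
  refine eq_zero_of_degree_lt_of_eval_index_eq_zero univ hnodes.injOn
    (card_univ (α := ι) ▸ degree_cauchyPoly_lt hf v) fun i _ => ?_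
  refine eval_cauchyPoly_eq_zero_of_mulVec_apply_eq_zero hf hhf ?_
  simpa [mulVec, dotProduct] using congrFun hMv i

end

theorem stmt_8_general {F : Type*} [Field F]
    {n k : ℕ}
    (h : Fin (n - k) → F) (f : Fin k → F)
    (hh : Function.Injective h) (hf : Function.Injective f)
    (hhf : ∀ i j, h i ≠ f j)
    (B : Matrix (Fin (n - k)) (Fin k) F) (hB : ∀ i j, B i j = (h i - f j)⁻¹)
    (GS : Matrix (Fin k ⊕ Fin (n - k)) (Fin k) F) (hGS : GS = Matrix.fromRows 1 B)
    (r : Fin k → Fin k ⊕ Fin (n - k)) (hr : Function.Injective r) :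
    IsUnit (GS.submatrix r id) := by
  obtain rfl : B = cauchyMatrix h f := Matrix.ext hB
  subst hGS
  exact isUnit_submatrix_fromRows_one_cauchyMatrix hh hf hhf hr

/-- For the systematic matrix `G_S = [I_k; B]` with `B` an `(n-k) × k` Cauchy matrix over a
finite field, every `k × k` submatrix formed by `k` of the `n` rows is invertible; in
particular the systematic code generated by `G_S` is MDS. -/
theorem stmt_8 {F : Type*} [Field F] [Fintype F] [DecidableEq F]
    {n k : ℕ} (hkn : k < n)
    (h : Fin (n - k) → F) (f : Fin k → F)
    (hh : Function.Injective h) (hf : Function.Injective f)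
    (hhf : ∀ i j, h i ≠ f j)
    (B : Matrix (Fin (n - k)) (Fin k) F) (hB : ∀ i j, B i j = (h i - f j)⁻¹)
    (GS : Matrix (Fin k ⊕ Fin (n - k)) (Fin k) F) (hGS : GS = Matrix.fromRows 1 B)
    (r : Fin k → Fin k ⊕ Fin (n - k)) (hr : Function.Injective r) :
    IsUnit (GS.submatrix r id) :=
  stmt_8_general h f hh hf hhf B hB GS hGS r hr
end

section
/- Let F_q be a finite field, let γ ≥ 1 and k be integers with 2γ ≤ k − 1 and 2γ > n − k, let B be any (n−k) × k matrix over F_q, and let G_S = [I_k; B] be the n × k systematic matrix. Then no 2γ × k submatrix of G_S satisfies the sparse-recovery criterion for γ: for every 2γ-element subset R of row indices, some 2γ columns of the corresponding submatrix are linearly dependent. -/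
/-- For the systematic matrix `G_S = [I_k; B]` with `2γ ≤ k - 1` and `2γ > n - k`, no
`2γ × k` submatrix of `G_S` satisfies the sparse-recovery criterion: for every choice of
`2γ` rows, some `2γ` columns of the resulting submatrix are linearly dependent. -/
theorem stmt_10 {F : Type*} [Field F] [Fintype F] [DecidableEq F]
    {n k γ : ℕ} (hγ : 1 ≤ γ) (hk : 2 * γ + 1 ≤ k) (hkn : k ≤ n) (hnk : n - k < 2 * γ)
    (B : Matrix (Fin (n - k)) (Fin k) F)
    (GS : Matrix (Fin k ⊕ Fin (n - k)) (Fin k) F) (hGS : GS = Matrix.fromRows 1 B)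
    (r : Fin (2 * γ) → Fin k ⊕ Fin (n - k)) (hr : Function.Injective r) :
    ∃ s : Finset (Fin k), s.card = 2 * γ ∧
      ¬ LinearIndependent F (fun j : s => fun t => GS (r t) (j : Fin k)) := by
  -- Find a row coming from the identity part.
  have hm : ¬ ∀ t, ∃ i, r t = Sum.inr i := by
    intro h
    choose g hg using h
    have hginj : Function.Injective g := by
      intro a b hab
      apply hr
      rw [hg a, hg b, hab]
    have := Fintype.card_le_of_injective g hginj
    simp only [Fintype.card_fin] at this
    omega
  push_neg at hm
  obtain ⟨t0, ht0⟩ := hm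
  obtain ⟨i0, hi0⟩ : ∃ i, r t0 = Sum.inl i := by
    cases h : r t0 with
    | inl i => exact ⟨i, rfl⟩
    | inr i => exact absurd h (ht0 i)
  -- choose 2γ columns avoiding i0
  have hcard : 2 * γ ≤ (Finset.univ.erase i0).card := by
    rw [Finset.card_erase_of_mem (Finset.mem_univ _), Finset.card_univ, Fintype.card_fin]
    omega
  obtain ⟨s, hs_sub, hs_card⟩ := Finset.exists_subset_card_eq hcard
  refine ⟨s, hs_card, ?_⟩
  intro hli
  set v : s → (Fin (2 * γ) → F) := fun j t => GS (r t) (j : Fin k) with hv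
  set W := LinearMap.ker (LinearMap.proj t0 : (Fin (2 * γ) → F) →ₗ[F] F) with hW
  have hmem : ∀ j : s, v j ∈ W := by
    intro j
    have hj : (j : Fin k) ≠ i0 := by
      have := hs_sub j.2
      exact Finset.ne_of_mem_erase this
    simp only [hW, LinearMap.mem_ker, LinearMap.proj_apply, hv, hi0, hGS,
      Matrix.fromRows_apply_inl]
    exact Matrix.one_apply_ne (Ne.symm hj)
  have hli' : LinearIndependent F (fun j : s => (⟨v j, hmem j⟩ : W)) := by
    apply LinearIndependent.of_comp W.subtype
    exact hli
  have hcardle := hli'.fintype_card_le_finrank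
  have hsurj : Function.Surjective (LinearMap.proj t0 : (Fin (2 * γ) → F) →ₗ[F] F) := by
    intro c
    exact ⟨Function.update 0 t0 c, by simp⟩
  have hrk := LinearMap.finrank_range_add_finrank_ker
    (LinearMap.proj t0 : (Fin (2 * γ) → F) →ₗ[F] F)
  rw [LinearMap.range_eq_top.mpr hsurj, finrank_top] at hrk
  have h1 : Module.finrank F F = 1 := Module.finrank_self F
  have h2 : Module.finrank F (Fin (2 * γ) → F) = 2 * γ := by
    simp [Module.finrank_pi]
  have h3 : Fintype.card s = 2 * γ := by
    rw [Fintype.card_coe, hs_card]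
  rw [h1, h2, ← hW] at hrk
  rw [h3] at hcardle
  omega
end

section
/- Let F_q be a finite field, let k < n, let B be an (n−k) × k Cauchy matrix over F_q, and let γ ≥ 1 satisfy 2γ ≤ n − k and 2γ < k. Then every γ-sparse vector z ∈ F_q^k is uniquely determined by any 2γ of the parity symbols: if z, z' ∈ F_q^k are both γ-sparse, R is a set of 2γ row indices of B, and (Bz)_i = (Bz')_i for all i ∈ R, then z = z'. -/
open Polynomial Finset

/-- Systematic SEC with an `(n-k) × k` Cauchy parity matrix `B`: if `2γ ≤ n - k` and
`2γ < k`, every `γ`-sparse vector `z` is uniquely determined by any `2γ` parity symbols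
of `Bz`. -/
theorem stmt_11 {F : Type*} [Field F] [Fintype F] [DecidableEq F]
    {n k γ : ℕ} (hkn : k < n) (hγ : 1 ≤ γ) (h1 : 2 * γ ≤ n - k) (h2 : 2 * γ < k)
    (h : Fin (n - k) → F) (f : Fin k → F)
    (hh : Function.Injective h) (hf : Function.Injective f)
    (hhf : ∀ i j, h i ≠ f j)
    (B : Matrix (Fin (n - k)) (Fin k) F) (hB : ∀ i j, B i j = (h i - f j)⁻¹)
    (z z' : Fin k → F) (hz : hammingNorm z ≤ γ) (hz' : hammingNorm z' ≤ γ)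
    (R : Finset (Fin (n - k))) (hR : R.card = 2 * γ)
    (hagree : ∀ i ∈ R, B.mulVec z i = B.mulVec z' i) : z = z' := by
  set w : Fin k → F := z - z' with hw
  suffices hw0 : w = 0 by
    funext j
    have := congrFun hw0 j
    simpa [hw, sub_eq_zero] using this
  -- support of w
  set S : Finset (Fin k) := Finset.univ.filter (fun j => w j ≠ 0) with hS
  have hScard : S.card ≤ 2 * γ := by
    have hsub : S ⊆ (Finset.univ.filter (fun j => z j ≠ 0)) ∪
        (Finset.univ.filter (fun j => z' j ≠ 0)) := by
      intro j hj
      simp only [hS, mem_filter, mem_univ, true_and, hw] at hj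
      by_contra hc
      simp only [mem_union, mem_filter, mem_univ, true_and, not_or, not_not] at hc
      apply hj
      simp [hc.1, hc.2]
    calc S.card ≤ _ := Finset.card_le_card hsub
      _ ≤ _ + _ := Finset.card_union_le _ _
      _ ≤ γ + γ := by
        exact Nat.add_le_add hz hz'
      _ = 2 * γ := by ring
  -- B w vanishes on R
  have hBw : ∀ i ∈ R, ∑ j ∈ S, (h i - f j)⁻¹ * w j = 0 := by
    intro i hi
    have : B.mulVec w i = 0 := by
      have : B.mulVec z i - B.mulVec z' i = 0 := by rw [hagree i hi]; ring
      rw [← this]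
      simp [Matrix.mulVec, dotProduct, hw, Finset.sum_sub_distrib, sub_mul, mul_sub]
    rw [← this]
    rw [Matrix.mulVec, dotProduct]
    rw [Finset.sum_subset (Finset.subset_univ S)]
    · exact Finset.sum_congr rfl (fun j _ => by rw [hB])
    · intro j _ hj
      simp only [hS, mem_filter, mem_univ, true_and, not_not] at hj
      simp [hj]
  -- the interpolation polynomial
  set P : F[X] := ∑ j ∈ S, C (w j) * ∏ l ∈ S.erase j, (X - C (f l)) with hP
  have hdeg : P.natDegree < 2 * γ := by
    have : P.natDegree ≤ 2 * γ - 1 := by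
      apply Polynomial.natDegree_sum_le_of_forall_le
      intro j hj
      calc (C (w j) * ∏ l ∈ S.erase j, (X - C (f l))).natDegree
          ≤ (C (w j)).natDegree + (∏ l ∈ S.erase j, (X - C (f l))).natDegree :=
            Polynomial.natDegree_mul_le
        _ ≤ 0 + (S.erase j).card := by
            gcongr
            · simp
            · apply le_trans (Polynomial.natDegree_prod_le _ _)
              apply le_trans (Finset.sum_le_card_nsmul _ _ 1 ?_)
              · simp
              · intro l _
                exact Polynomial.natDegree_X_sub_C_le _
        _ ≤ 2 * γ - 1 := by
            rw [Finset.card_erase_of_mem hj]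
            omega
    omega
  have hPzero : P = 0 := by
    apply Polynomial.eq_zero_of_natDegree_lt_card_of_eval_eq_zero' P (R.image h)
    · intro x hx
      obtain ⟨i, hi, rfl⟩ := Finset.mem_image.mp hx
      have key : P.eval (h i) = (∏ l ∈ S, (h i - f l)) * ∑ j ∈ S, (h i - f j)⁻¹ * w j := by
        rw [hP]
        simp only [Polynomial.eval_finset_sum, Polynomial.eval_mul, Polynomial.eval_C,
          Polynomial.eval_prod, Polynomial.eval_sub, Polynomial.eval_X]
        rw [Finset.mul_sum]
        apply Finset.sum_congr rfl
        intro j hj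
        rw [← Finset.prod_erase_mul S _ hj]
        have hne : h i - f j ≠ 0 := sub_ne_zero.mpr (hhf i j)
        field_simp
      rw [key, hBw i hi, mul_zero]
    · rw [Finset.card_image_of_injective _ hh, hR]; exact hdeg
  -- conclude w = 0
  funext j
  show w j = 0
  by_contra hj
  have hjS : j ∈ S := by simp [hS, hj]
  have : P.eval (f j) = w j * ∏ l ∈ S.erase j, (f j - f l) := by
    rw [hP]
    simp only [Polynomial.eval_finset_sum, Polynomial.eval_mul, Polynomial.eval_C,
      Polynomial.eval_prod, Polynomial.eval_sub, Polynomial.eval_X]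
    rw [Finset.sum_eq_single j]
    · intro b hb hbj
      have : ∏ l ∈ S.erase b, (f j - f l) = 0 := by
        apply Finset.prod_eq_zero (Finset.mem_erase.mpr ⟨Ne.symm hbj, hjS⟩)
        simp
      rw [this, mul_zero]
    · intro hjS'; exact absurd hjS hjS'
  rw [hPzero] at this
  simp only [Polynomial.eval_zero] at this
  have hprod : ∏ l ∈ S.erase j, (f j - f l) ≠ 0 := by
    apply Finset.prod_ne_zero_iff.mpr
    intro l hl
    have : l ≠ j := (Finset.mem_erase.mp hl).1
    exact sub_ne_zero.mpr (fun he => this (hf he.symm))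
  have : w j = 0 := by
    rcases mul_eq_zero.mp this.symm with h' | h'
    · exact h'
    · exact absurd h' hprod
  exact hj this
end

section
/- Let F_q be a finite field and let G be a 6 × 3 Cauchy matrix over F_q. For a nonempty subset F of the row indices {1,…,6} (the failed nodes), say that F is recoverable if every 1-sparse vector z ∈ F_q^3 is uniquely determined by the coordinates (Gz)_i for i ∉ F. Then F is recoverable if and only if |F| ≤ 4, and hence the number of recoverable nonempty failure patterns (out of the 63 nonempty subsets) is exactly 56. -/
lemma cauchy_det {F : Type*} [Field F] (a b c d : F) (hab : a ≠ b) (hcd : c ≠ d)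
    (hac : a - c ≠ 0) (had : a - d ≠ 0) (hbc : b - c ≠ 0) (hbd : b - d ≠ 0) :
    (a - c)⁻¹ * (b - d)⁻¹ ≠ (a - d)⁻¹ * (b - c)⁻¹ := by
  intro hE
  field_simp at hE
  have hz : (a - b) * (c - d) = 0 := by linear_combination -hE
  rcases mul_eq_zero.mp hz with h' | h'
  · exact hab (sub_eq_zero.mp h')
  · exact hcd (sub_eq_zero.mp h')

lemma sparse_ex {F : Type*} [Field F] [DecidableEq F] (z : Fin 3 → F)
    (hz : hammingNorm z ≤ 1) : ∃ j a, z = Pi.single j a := by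
  by_cases h0 : z = 0
  · exact ⟨0, 0, by simp [h0]⟩
  · obtain ⟨j, hj⟩ := Function.ne_iff.mp h0
    simp only [Pi.zero_apply] at hj
    refine ⟨j, z j, funext fun k => ?_⟩
    rcases eq_or_ne k j with rfl | hk
    · simp
    · rw [Pi.single_eq_of_ne hk]
      by_contra hzk
      have h2 : 2 ≤ hammingNorm z := by
        have hsub : ({k, j} : Finset (Fin 3)) ⊆ Finset.univ.filter (fun i => z i ≠ 0) := by
          intro i hi
          simp only [Finset.mem_insert, Finset.mem_singleton] at hi
          rcases hi with rfl | rfl <;> simp [hzk, hj]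
        calc 2 = ({k, j} : Finset (Fin 3)).card := by
              rw [Finset.card_insert_of_notMem (by simpa), Finset.card_singleton]
        _ ≤ (Finset.univ.filter (fun i => z i ≠ 0)).card := Finset.card_le_card hsub
        _ = hammingNorm z := rfl
      omega

lemma hn_single {F : Type*} [Field F] [DecidableEq F] (j : Fin 3) (a : F) :
    hammingNorm (Pi.single j a : Fin 3 → F) ≤ 1 := by
  calc hammingNorm (Pi.single j a : Fin 3 → F)
      = (Finset.univ.filter (fun i => (Pi.single j a : Fin 3 → F) i ≠ 0)).card := rfl
    _ ≤ ({j} : Finset (Fin 3)).card := Finset.card_le_card (by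
        intro i hi
        simp only [Finset.mem_filter, Finset.mem_univ, true_and] at hi
        simp only [Finset.mem_singleton]
        by_contra hij
        exact hi (by simp [Pi.single_eq_of_ne hij]))
    _ = 1 := Finset.card_singleton j

theorem stmt_13' {F : Type*} [Field F] [Fintype F] [DecidableEq F]
    (h : Fin 6 → F) (f : Fin 3 → F)
    (hh : Function.Injective h) (hf : Function.Injective f)
    (hhf : ∀ i j, h i ≠ f j)
    (G : Matrix (Fin 6) (Fin 3) F) (hG : ∀ i j, G i j = (h i - f j)⁻¹) :
    ∀ Fl : Finset (Fin 6),
      ((∀ z z' : Fin 3 → F, hammingNorm z ≤ 1 → hammingNorm z' ≤ 1 →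
          (∀ i ∉ Fl, G.mulVec z i = G.mulVec z' i) → z = z') ↔ Fl.card ≤ 4) := by
  have hGne : ∀ i j, G i j ≠ 0 := fun i j => by
    rw [hG]; exact inv_ne_zero (sub_ne_zero.mpr (hhf i j))
  intro Fl
  constructor
  · intro hU
    by_contra hc
    push_neg at hc
    have hcompl : Flᶜ.card ≤ 1 := by
      have := Finset.card_compl Fl
      simp only [Fintype.card_fin] at this
      omega
    interval_cases hcc : Flᶜ.card
    · -- complement empty
      have hmem : ∀ i : Fin 6, i ∈ Fl := by
        intro i
        by_contra hi
        have : i ∈ Flᶜ := Finset.mem_compl.mpr hi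
        have := Finset.card_eq_zero.mp hcc
        simp [this] at *
      have := hU 0 (Pi.single 0 1) (by simp) (hn_single 0 1)
        (fun i hi => absurd (hmem i) hi)
      have h10 := congrFun this 0
      simp at h10
    · -- complement is a singleton {i0}
      obtain ⟨i0, hi0⟩ := Finset.card_eq_one.mp hcc
      have heq := hU (Pi.single 0 (G i0 1)) (Pi.single 1 (G i0 0))
        (hn_single _ _) (hn_single _ _) ?_
      · have := congrFun heq 0
        simp only [Pi.single_eq_same, Pi.single_eq_of_ne (show (0:Fin 3) ≠ 1 by decide)] at this
        exact hGne i0 1 this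
      · intro i hi
        have : i ∈ Flᶜ := Finset.mem_compl.mpr hi
        rw [hi0, Finset.mem_singleton] at this
        subst this
        simp [Matrix.mulVec_single, mul_comm]
  · intro hcard z z' hz hz' hagree
    obtain ⟨j, a, rfl⟩ := sparse_ex z hz
    obtain ⟨j', a', rfl⟩ := sparse_ex z' hz'
    have h2 : 1 < Flᶜ.card := by
      have := Finset.card_compl Fl
      simp only [Fintype.card_fin] at this
      omega
    obtain ⟨i1, hi1, i2, hi2, hii⟩ := Finset.one_lt_card.mp h2
    have e1 : G i1 j * a = G i1 j' * a' := by
      have := hagree i1 (Finset.mem_compl.mp hi1)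
      simpa [Matrix.mulVec_single] using this
    have e2 : G i2 j * a = G i2 j' * a' := by
      have := hagree i2 (Finset.mem_compl.mp hi2)
      simpa [Matrix.mulVec_single] using this
    rcases eq_or_ne j j' with rfl | hjj
    · have : a = a' := mul_left_cancel₀ (hGne i1 j) e1
      rw [this]
    · have ha : a = 0 := by
        by_contra ha
        have ha' : a' ≠ 0 := by
          intro h0
          rw [h0, mul_zero] at e1
          exact ha ((mul_eq_zero.mp e1).resolve_left (hGne i1 j))
        have hmul : G i1 j * G i2 j' * (a * a') = G i1 j' * G i2 j * (a * a') := by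
          calc G i1 j * G i2 j' * (a * a') = (G i1 j * a) * (G i2 j' * a') := by ring
            _ = (G i1 j' * a') * (G i2 j * a) := by rw [e1, ← e2]
            _ = G i1 j' * G i2 j * (a * a') := by ring
        have hGG := mul_right_cancel₀ (mul_ne_zero ha ha') hmul
        rw [hG, hG, hG, hG] at hGG
        exact cauchy_det (h i1) (h i2) (f j) (f j') (fun he => hii (hh he))
          (fun he => hjj (hf he)) (sub_ne_zero.mpr (hhf _ _)) (sub_ne_zero.mpr (hhf _ _))
          (sub_ne_zero.mpr (hhf _ _)) (sub_ne_zero.mpr (hhf _ _)) hGG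
      have ha' : a' = 0 := by
        rw [ha, mul_zero] at e1
        exact ((mul_eq_zero.mp e1.symm).resolve_left (hGne i1 j'))
      rw [ha, ha']
      simp

open scoped Classical in
/-- For a `6 × 3` Cauchy matrix `G` over a finite field, a nonempty failure pattern
`Fl ⊆ {1,…,6}` is recoverable (every 1-sparse `z` is determined by the surviving
coordinates of `Gz`) iff `|Fl| ≤ 4`; hence exactly 56 of the 63 nonempty failure
patterns are recoverable. -/
theorem stmt_13 {F : Type*} [Field F] [Fintype F] [DecidableEq F]
    (h : Fin 6 → F) (f : Fin 3 → F)
    (hh : Function.Injective h) (hf : Function.Injective f)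
    (hhf : ∀ i j, h i ≠ f j)
    (G : Matrix (Fin 6) (Fin 3) F) (hG : ∀ i j, G i j = (h i - f j)⁻¹) :
    (∀ Fl : Finset (Fin 6), Fl.Nonempty →
      ((∀ z z' : Fin 3 → F, hammingNorm z ≤ 1 → hammingNorm z' ≤ 1 →
          (∀ i ∉ Fl, G.mulVec z i = G.mulVec z' i) → z = z') ↔ Fl.card ≤ 4))
    ∧ (Finset.univ.filter (fun Fl : Finset (Fin 6) => Fl.Nonempty ∧
        ∀ z z' : Fin 3 → F, hammingNorm z ≤ 1 → hammingNorm z' ≤ 1 →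
          (∀ i ∉ Fl, G.mulVec z i = G.mulVec z' i) → z = z')).card = 56 := by
  refine ⟨fun Fl _ => stmt_13' h f hh hf hhf G hG Fl, ?_⟩
  rw [Finset.filter_congr (fun Fl _ => and_congr_right
    (fun _ => stmt_13' h f hh hf hhf G hG Fl))]
  decide
end

section
/- Let F_q be a finite field, let B be a 3 × 3 Cauchy matrix over F_q, and let G_S = [I_3; B] be the 6 × 3 systematic matrix. For a nonempty subset F of the row indices {1,…,6} (the failed nodes), say that F is recoverable if every 1-sparse vector z ∈ F_q^3 is uniquely determined by the coordinates (G_S z)_i for i ∉ F. Then F is recoverable if and only if either |F| ≤ 3, or |F| = 4 and the two surviving rows both lie in the parity rows {4,5,6}; consequently, exactly 44 of the 63 nonempty failure patterns are recoverable. -/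
open Finset Sum Matrix

private lemma stmt14_comb1 (j₁ j₂ : Fin 3) (hj : j₁ ≠ j₂) :
    ∀ Fl : Finset (Fin 3 ⊕ Fin 3), Fl.card ≤ 3 →
    (inl j₁ ∉ Fl ∧ inl j₂ ∉ Fl)
    ∨ (inl j₁ ∉ Fl ∧ ∃ i : Fin 3, inr i ∉ Fl)
    ∨ (inl j₂ ∉ Fl ∧ ∃ i : Fin 3, inr i ∉ Fl)
    ∨ (∃ i i' : Fin 3, i ≠ i' ∧ inr i ∉ Fl ∧ inr i' ∉ Fl) := by
  fin_cases j₁ <;> fin_cases j₂ <;> first | exact absurd rfl hj | decide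

private lemma stmt14_comb2 : ∀ Fl : Finset (Fin 3 ⊕ Fin 3), Fl.card = 4 →
    (∀ i ∉ Fl, ∃ j, i = inr j) →
    ∃ i i' : Fin 3, i ≠ i' ∧ inr i ∉ Fl ∧ inr i' ∉ Fl := by decide

set_option synthInstance.maxSize 4000 in
private lemma stmt14_comb3 : ∀ Fl : Finset (Fin 3 ⊕ Fin 3),
    ¬(Fl.card ≤ 3 ∨ (Fl.card = 4 ∧ ∀ i ∉ Fl, ∃ j, i = inr j)) →
    (∃ j₀ : Fin 3, ∀ r ∉ Fl, ∃ j, r = inl j ∧ j ≠ j₀)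
    ∨ (∃ i j₁ j₂ : Fin 3, j₁ ≠ j₂ ∧
        ∀ r ∉ Fl, r = inr i ∨ ∃ j, r = inl j ∧ j ≠ j₁ ∧ j ≠ j₂) := by decide

private lemma stmt14_fin3_others (j₀ : Fin 3) :
    ∃ j₁ j₂ : Fin 3, j₀ ≠ j₁ ∧ j₀ ≠ j₂ ∧ j₁ ≠ j₂ := by revert j₀; decide

private lemma stmt14_fin3_tri : ∀ j j₀ j₁ j₂ : Fin 3, j₀ ≠ j₁ → j₀ ≠ j₂ → j₁ ≠ j₂ →
    j = j₀ ∨ j = j₁ ∨ j = j₂ := by decide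

private lemma stmt14_sum3 {M : Type*} [AddCommMonoid M] (g : Fin 3 → M)
    (j₀ j₁ j₂ : Fin 3) (h01 : j₀ ≠ j₁) (h02 : j₀ ≠ j₂) (h12 : j₁ ≠ j₂) :
    ∑ j, g j = g j₀ + g j₁ + g j₂ := by
  have huniv : (Finset.univ : Finset (Fin 3)) = {j₀, j₁, j₂} := by
    symm
    apply Finset.eq_univ_of_card
    rw [Finset.card_insert_of_notMem (by simp [h01, h02]),
      Finset.card_insert_of_notMem (by simp [h12]), Finset.card_singleton]
    rfl
  rw [huniv, Finset.sum_insert (by simp [h01, h02]), Finset.sum_insert (by simp [h12]),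
    Finset.sum_singleton, ← add_assoc]

private lemma stmt14_cauchy2 {F : Type*} [Field F] {a b c d : F} (hab : a ≠ b) (hcd : c ≠ d)
    (hac : a ≠ c) (had : a ≠ d) (hbc : b ≠ c) (hbd : b ≠ d) :
    (a - c)⁻¹ * (b - d)⁻¹ - (a - d)⁻¹ * (b - c)⁻¹ ≠ 0 := by
  have h1 : a - c ≠ 0 := sub_ne_zero.mpr hac
  have h2 : b - d ≠ 0 := sub_ne_zero.mpr hbd
  have h3 : a - d ≠ 0 := sub_ne_zero.mpr had
  have h4 : b - c ≠ 0 := sub_ne_zero.mpr hbc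
  have h5 : a - b ≠ 0 := sub_ne_zero.mpr hab
  have h6 : d - c ≠ 0 := sub_ne_zero.mpr fun e => hcd e.symm
  have key : (a - c)⁻¹ * (b - d)⁻¹ - (a - d)⁻¹ * (b - c)⁻¹
      = ((a - b) * (d - c)) * ((a - c)⁻¹ * (b - d)⁻¹ * ((a - d)⁻¹ * (b - c)⁻¹)) := by
    field_simp
    ring
  rw [key]
  exact mul_ne_zero (mul_ne_zero h5 h6)
    (mul_ne_zero (mul_ne_zero (inv_ne_zero h1) (inv_ne_zero h2))
      (mul_ne_zero (inv_ne_zero h3) (inv_ne_zero h4)))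

private lemma stmt14_solve2 {F : Type*} [Field F] {a b c d x y : F}
    (hm : a * d - b * c ≠ 0) (e1 : a * x + b * y = 0) (e2 : c * x + d * y = 0) :
    x = 0 ∧ y = 0 := by
  have hx : (a * d - b * c) * x = d * (a * x + b * y) - b * (c * x + d * y) := by ring
  have hy : (a * d - b * c) * y = a * (c * x + d * y) - c * (a * x + b * y) := by ring
  rw [e1, e2] at hx hy
  simp only [mul_zero, sub_zero, zero_sub, neg_zero] at hx hy
  constructor
  · rcases mul_eq_zero.mp hx with h | h
    · exact absurd h hm
    · exact h
  · rcases mul_eq_zero.mp hy with h | h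
    · exact absurd h hm
    · exact h

private lemma stmt14_ham_if {F : Type*} [Field F] [DecidableEq F] (j₀ : Fin 3) (c : F) :
    hammingNorm (fun j => if j = j₀ then c else 0) ≤ 1 := by
  classical
  have : (Finset.univ.filter fun j : Fin 3 => (if j = j₀ then c else 0) ≠ 0) ⊆ {j₀} := by
    intro j hj
    simp only [Finset.mem_filter] at hj
    rcases eq_or_ne j j₀ with h | h
    · simp [h]
    · exact absurd (by simp [h]) hj.2
  simpa [hammingNorm] using (Finset.card_le_card this).trans_eq (Finset.card_singleton j₀)

private lemma stmt14_exists_zero3 {F : Type*} [Field F] [DecidableEq F] (z z' : Fin 3 → F)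
    (hz : hammingNorm z ≤ 1) (hz' : hammingNorm z' ≤ 1) : ∃ j, z j = 0 ∧ z' j = 0 := by
  classical
  by_contra hc
  push_neg at hc
  have hsub : (Finset.univ : Finset (Fin 3)) ⊆
      (Finset.univ.filter fun j => z j ≠ 0) ∪ (Finset.univ.filter fun j => z' j ≠ 0) := by
    intro j _
    rcases eq_or_ne (z j) 0 with h0 | h0
    · simp [hc j h0]
    · simp [h0]
  have h3 : (3 : ℕ) ≤ hammingNorm z + hammingNorm z' := by
    have := (Finset.card_le_card hsub).trans (Finset.card_union_le _ _)
    simpa [hammingNorm] using this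
  omega

open scoped Classical in
/-- For the `(6,3)` systematic matrix `G_S = [I_3; B]` with `B` a `3 × 3` Cauchy matrix over
a finite field, a nonempty failure pattern `Fl` is recoverable (every 1-sparse `z` is
determined by the surviving coordinates of `G_S z`) iff `|Fl| ≤ 3`, or `|Fl| = 4` and both
surviving rows are parity rows; hence exactly 44 of the 63 nonempty failure patterns
are recoverable. -/
theorem stmt_14 {F : Type*} [Field F] [Fintype F] [DecidableEq F]
    (h : Fin 3 → F) (f : Fin 3 → F)
    (hh : Function.Injective h) (hf : Function.Injective f)
    (hhf : ∀ i j, h i ≠ f j)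
    (B : Matrix (Fin 3) (Fin 3) F) (hB : ∀ i j, B i j = (h i - f j)⁻¹)
    (GS : Matrix (Fin 3 ⊕ Fin 3) (Fin 3) F) (hGS : GS = Matrix.fromRows 1 B) :
    (∀ Fl : Finset (Fin 3 ⊕ Fin 3), Fl.Nonempty →
      ((∀ z z' : Fin 3 → F, hammingNorm z ≤ 1 → hammingNorm z' ≤ 1 →
          (∀ i ∉ Fl, GS.mulVec z i = GS.mulVec z' i) → z = z')
        ↔ (Fl.card ≤ 3 ∨ (Fl.card = 4 ∧ ∀ i ∉ Fl, ∃ j, i = Sum.inr j))))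
    ∧ (Finset.univ.filter (fun Fl : Finset (Fin 3 ⊕ Fin 3) => Fl.Nonempty ∧
        ∀ z z' : Fin 3 → F, hammingNorm z ≤ 1 → hammingNorm z' ≤ 1 →
          (∀ i ∉ Fl, GS.mulVec z i = GS.mulVec z' i) → z = z')).card = 44 := by
  classical
  have hBne : ∀ i j, B i j ≠ 0 := by
    intro i j
    rw [hB]
    exact inv_ne_zero (sub_ne_zero.mpr (hhf i j))
  have hMinor : ∀ i i' j j', i ≠ i' → j ≠ j' →
      B i j * B i' j' - B i j' * B i' j ≠ 0 := by
    intro i i' j j' hi hj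
    rw [hB, hB, hB, hB]
    exact stmt14_cauchy2 (fun e => hi (hh e)) (fun e => hj (hf e))
      (hhf i j) (hhf i j') (hhf i' j) (hhf i' j')
  have hmul1 : ∀ (w : Fin 3 → F) (j : Fin 3), GS.mulVec w (inl j) = w j := by
    intro w j
    rw [hGS, Matrix.fromRows_mulVec]
    simp
  have hmul2 : ∀ (w : Fin 3 → F) (i : Fin 3), GS.mulVec w (inr i) = ∑ j, B i j * w j := by
    intro w i
    rw [hGS, Matrix.fromRows_mulVec]
    simp [Matrix.mulVec, dotProduct]
  have key : ∀ Fl : Finset (Fin 3 ⊕ Fin 3),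
      ((∀ z z' : Fin 3 → F, hammingNorm z ≤ 1 → hammingNorm z' ≤ 1 →
          (∀ i ∉ Fl, GS.mulVec z i = GS.mulVec z' i) → z = z')
        ↔ (Fl.card ≤ 3 ∨ (Fl.card = 4 ∧ ∀ i ∉ Fl, ∃ j, i = Sum.inr j))) := by
    intro Fl
    constructor
    · intro hR
      by_contra hP
      rcases stmt14_comb3 Fl hP with ⟨j₀, hC1⟩ | ⟨i, j₁, j₂, hj, hC2⟩
      · have hzz := hR (fun j => if j = j₀ then 1 else 0) 0 (stmt14_ham_if _ _)
          (by simp) ?_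
        · have := congrFun hzz j₀
          simp at this
        · intro r hr
          obtain ⟨j, rfl, hjj⟩ := hC1 r hr
          rw [hmul1, hmul1]
          simp [hjj]
      · have hzz := hR (fun j => if j = j₁ then B i j₂ else 0)
          (fun j => if j = j₂ then B i j₁ else 0) (stmt14_ham_if _ _) (stmt14_ham_if _ _) ?_
        · have := congrFun hzz j₁
          simp [hj] at this
          exact hBne i j₂ this
        · intro r hr
          rcases hC2 r hr with rfl | ⟨j, rfl, hj1, hj2⟩
          · rw [hmul2, hmul2]
            simp only [mul_ite, mul_zero, Finset.sum_ite_eq', Finset.mem_univ, if_true]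
            ring
          · rw [hmul1, hmul1]
            simp [hj1, hj2]
    · intro hP z z' hz hz' hagree
      obtain ⟨j₀, hzj, hz'j⟩ := stmt14_exists_zero3 z z' hz hz'
      set w : Fin 3 → F := z - z' with hwdef
      have hw0 : ∀ r ∉ Fl, GS.mulVec w r = 0 := by
        intro r hr
        rw [hwdef, Matrix.mulVec_sub, Pi.sub_apply, hagree r hr, sub_self]
      have hwj₀ : w j₀ = 0 := by simp [hwdef, hzj, hz'j]
      obtain ⟨j₁, j₂, h01, h02, h12⟩ := stmt14_fin3_others j₀
      have Einl : ∀ j, inl j ∉ Fl → w j = 0 := by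
        intro j hjmem
        rw [← hmul1 w j]
        exact hw0 _ hjmem
      have Einr : ∀ i, inr i ∉ Fl → B i j₁ * w j₁ + B i j₂ * w j₂ = 0 := by
        intro i hi
        have hzero := hw0 _ hi
        rw [hmul2 w i, stmt14_sum3 _ j₀ j₁ j₂ h01 h02 h12] at hzero
        rw [hwj₀, mul_zero, zero_add] at hzero
        exact hzero
      have hcases : (inl j₁ ∉ Fl ∧ inl j₂ ∉ Fl)
          ∨ (inl j₁ ∉ Fl ∧ ∃ i : Fin 3, inr i ∉ Fl)
          ∨ (inl j₂ ∉ Fl ∧ ∃ i : Fin 3, inr i ∉ Fl)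
          ∨ (∃ i i' : Fin 3, i ≠ i' ∧ inr i ∉ Fl ∧ inr i' ∉ Fl) := by
        rcases hP with hc | hc
        · exact stmt14_comb1 j₁ j₂ h12 Fl hc
        · exact Or.inr (Or.inr (Or.inr (stmt14_comb2 Fl hc.1 hc.2)))
      have hfin : w j₁ = 0 ∧ w j₂ = 0 := by
        rcases hcases with ⟨ha, hb⟩ | ⟨ha, i, hb⟩ | ⟨ha, i, hb⟩ | ⟨i, i', hii, ha, hb⟩
        · exact ⟨Einl _ ha, Einl _ hb⟩
        · have h1 := Einl _ ha
          refine ⟨h1, ?_⟩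
          have h2 := Einr i hb
          rw [h1, mul_zero, zero_add] at h2
          rcases mul_eq_zero.mp h2 with hcon | hok
          · exact absurd hcon (hBne i j₂)
          · exact hok
        · have h1 := Einl _ ha
          refine ⟨?_, h1⟩
          have h2 := Einr i hb
          rw [h1, mul_zero, add_zero] at h2
          rcases mul_eq_zero.mp h2 with hcon | hok
          · exact absurd hcon (hBne i j₁)
          · exact hok
        · exact stmt14_solve2 (hMinor i i' j₁ j₂ hii h12) (Einr i ha) (Einr i' hb)
      funext j
      have hwj : w j = 0 := by
        rcases stmt14_fin3_tri j j₀ j₁ j₂ h01 h02 h12 with rfl | rfl | rfl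
        · exact hwj₀
        · exact hfin.1
        · exact hfin.2
      rw [hwdef, Pi.sub_apply, sub_eq_zero] at hwj
      exact hwj
  refine ⟨fun Fl _ => key Fl, ?_⟩
  have hfe : (Finset.univ.filter (fun Fl : Finset (Fin 3 ⊕ Fin 3) => Fl.Nonempty ∧
        ∀ z z' : Fin 3 → F, hammingNorm z ≤ 1 → hammingNorm z' ≤ 1 →
          (∀ i ∉ Fl, GS.mulVec z i = GS.mulVec z' i) → z = z'))
      = (Finset.univ.filter (fun Fl : Finset (Fin 3 ⊕ Fin 3) => Fl.Nonempty ∧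
        (Fl.card ≤ 3 ∨ (Fl.card = 4 ∧ ∀ i ∉ Fl, ∃ j, i = Sum.inr j)))) := by
    apply Finset.filter_congr
    intro Fl _
    exact and_congr_right fun _ => key Fl
  rw [hfe]
  have : (Finset.univ.filter (fun Fl : Finset (Fin 3 ⊕ Fin 3) => Fl.Nonempty ∧
        (Fl.card ≤ 3 ∨ (Fl.card = 4 ∧ ∀ i ∉ Fl, ∃ j, i = Sum.inr j)))).card = 44 := by
    decide
  convert this using 2
end
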